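/- If a ℤ²-tiling f of a Wang tile set W is periodic (has some nonzero periodicity vector), then W admits a ℤ²-tiling that is vertically periodic, i.e., a tiling f' and v_y > 0 with f'(x, y) = f'(x, y + v_y) for all (x, y) ∈ ℤ². -/

import Mathlib

/-- A Wang tile over a set of colors `C`. -/
structure WangTile (C : Type*) where
  west : C
  south : C
  east : C
  north : C
deriving DecidableEq

variable {C : Type*}

/-- `f` is a valid tiling of the discrete plane `ℤ²` by the tile set `W`. -/
def IsZTiling (W : Finset (WangTile C)) (f : ℤ × ℤ → WangTile C) : Prop :=
  ∀ x y : ℤ, f (x, y) ∈ W ∧ (f (x, y)).east = (f (x + 1, y)).west ∧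
    (f (x, y)).north = (f (x, y + 1)).south

/-- `g` is a valid tiling of the first quadrant `ℕ²` by the tile set `W`. -/
def IsNTiling (W : Finset (WangTile C)) (g : ℕ × ℕ → WangTile C) : Prop :=
  ∀ x y : ℕ, g (x, y) ∈ W ∧ (g (x, y)).east = (g (x + 1, y)).west ∧
    (g (x, y)).north = (g (x, y + 1)).south

/-- A `ℤ²`-tiling is periodic if it has a nonzero periodicity vector. -/
def PeriodicTiling (f : ℤ × ℤ → WangTile C) : Prop :=
  ∃ v : ℤ × ℤ, v ≠ 0 ∧ ∀ t : ℤ × ℤ, f (t + v) = f t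

/-- An `ℕ²`-tiling is y-recurrent if two distinct rows have the same horizontal word
(sequence of south colors). -/
def YRecurrent (g : ℕ × ℕ → WangTile C) : Prop :=
  ∃ i j : ℕ, i ≠ j ∧ ∀ x : ℕ, (g (x, i)).south = (g (x, j)).south


/-!
A nonzero period `(a, b)` may be taken with `b > 0`, or with `b = 0` and `a > 0`.

If `b = 0`, every row is `a`-periodic and hence determined by a word of length `a`, so two
rows coincide, and repeating the band of rows between them is a vertically periodic tiling.

If `b > 0`, the tiling is determined by its strip `ℤ × [0, b)`, i.e. by the bi-infinite sequence
of its columns of height `b`, subject to constraints between columns at distance `1` and `|a|`.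
By pigeonhole two windows of width `2(|a| + 1)` in this sequence coincide, so it can be made
`p`-periodic without violating any constraint. The resulting tiling has periods `(a, b)` and
`(p, 0)`, hence the vertical period `(0, p * b)`.
-/

open Function

theorem Function.Periodic.apply_toIcoMod {α β : Type*} [AddCommGroup α] [LinearOrder α]
    [IsOrderedAddMonoid α] [Archimedean α] {f : α → β} {p : α} (h : Periodic f p)
    (hp : 0 < p) (a b : α) : f (toIcoMod hp a b) = f b := by
  conv_rhs => rw [← toIcoMod_add_toIcoDiv_zsmul hp a b]
  exact (h.zsmul _ _).symm

section WindowRepeat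

variable {β : Type*}

theorem exists_window_repeat [Finite β] (g : ℤ → β) (N : ℕ) :
    ∃ x₀ p : ℤ, 0 < p ∧ (N : ℤ) ≤ p ∧
      ∀ j, -(N : ℤ) ≤ j → j < N → g (x₀ + p + j) = g (x₀ + j) := by
  obtain ⟨k₁, -, k₂, -, hlt, heq⟩ := Set.infinite_univ.exists_lt_map_eq_of_mapsTo
    (f := fun (k : ℤ) (j : Set.Ico (-(N : ℤ)) N) => g (k * (N + 1) + j))
    (Set.mapsTo_univ _ _) Set.finite_univ
  refine ⟨k₁ * (N + 1), (k₂ - k₁) * (N + 1), by nlinarith, by nlinarith, fun j hj₁ hj₂ => ?_⟩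
  convert (congrFun heq ⟨j, hj₁, hj₂⟩).symm using 2; ring

variable {g : ℤ → β} {x₀ p M N : ℤ}

/-- `g ∘ toIcoMod hp x₀` is the `p`-periodic sequence agreeing with `g` on `[x₀, x₀ + p)`. -/
theorem apply_toIcoMod_eq_of_window_repeat (hp : 0 < p) (hM₀ : 0 ≤ M) (hM : M ≤ p)
    (hN₀ : 0 ≤ N) (hN : N ≤ p) (hwin : ∀ j, -M ≤ j → j < N → g (x₀ + p + j) = g (x₀ + j))
    {y : ℤ} (hy₁ : x₀ - M ≤ y) (hy₂ : y < x₀ + p + N) : g (toIcoMod hp x₀ y) = g y := by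
  rcases lt_or_ge y x₀ with hy | hy
  · rw [(toIcoMod_eq_iff hp (c := y + p)).2 ⟨⟨by omega, by omega⟩, -1, by simp⟩]
    convert hwin (y - x₀) (by omega) (by omega) using 2 <;> ring
  rcases lt_or_ge y (x₀ + p) with hy' | hy'
  · rw [(toIcoMod_eq_self hp).2 ⟨hy, hy'⟩]
  · rw [(toIcoMod_eq_iff hp (c := y - p)).2 ⟨⟨by omega, by omega⟩, 1, by simp⟩]
    convert (hwin (y - x₀ - p) (by omega) (by omega)).symm using 2 <;> ring

theorem apply_toIcoMod_add_eq_of_window_repeat (hp : 0 < p) (hM₀ : 0 ≤ M) (hM : M ≤ p)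
    (hN₀ : 0 ≤ N) (hN : N ≤ p) (hwin : ∀ j, -M ≤ j → j < N → g (x₀ + p + j) = g (x₀ + j))
    (x : ℤ) {d : ℤ} (hd₁ : -M ≤ d) (hd₂ : d ≤ N) :
    g (toIcoMod hp x₀ (x + d)) = g (toIcoMod hp x₀ x + d) := by
  have hx := toIcoMod_mem_Ico hp x₀ x
  have hmod : toIcoMod hp x₀ (x + d) = toIcoMod hp x₀ (toIcoMod hp x₀ x + d) :=
    (toIcoMod_eq_toIcoMod hp).2 ⟨-toIcoDiv hp x₀ x, by rw [neg_zsmul, ← self_sub_toIcoMod]; ring⟩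
  rw [hmod]
  exact apply_toIcoMod_eq_of_window_repeat hp hM₀ hM hN₀ hN hwin (by linarith [hx.1])
    (by linarith [hx.2])

end WindowRepeat

def AdmitsVerticallyPeriodicTiling (W : Finset (WangTile C)) : Prop :=
  ∃ (f' : ℤ × ℤ → WangTile C) (vy : ℤ), IsZTiling W f' ∧ 0 < vy ∧
    ∀ x y : ℤ, f' (x, y) = f' (x, y + vy)

variable {W : Finset (WangTile C)} {f : ℤ × ℤ → WangTile C}

theorem admitsVerticallyPeriodicTiling_of_row_eq (hf : IsZTiling W f) {y₀ p : ℤ} (hp : 0 < p)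
    (hrow : ∀ x, f (x, y₀ + p) = f (x, y₀)) : AdmitsVerticallyPeriodicTiling W := by
  have hwin : ∀ j, -0 ≤ j → j < 1 → (fun x => f (x, y₀ + p + j)) = fun x => f (x, y₀ + j) := by
    intro j hj₁ hj₂
    obtain rfl : j = 0 := by omega
    simpa using funext hrow
  refine ⟨fun t => f (t.1, toIcoMod hp y₀ t.2), p, fun x y => ⟨(hf _ _).1, (hf _ _).2.1, ?_⟩,
    hp, fun x y => by simp⟩
  have hnext := apply_toIcoMod_add_eq_of_window_repeat (g := fun y x => f (x, y)) hp le_rfl hp.le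
    zero_le_one (by omega) hwin y (by simp) le_rfl
  rw [(hf _ _).2.2]
  exact congrArg WangTile.south (congrFun hnext x).symm

theorem admitsVerticallyPeriodicTiling_of_horizontal_period (hf : IsZTiling W f) {a : ℤ}
    (ha : 0 < a) (hper : Periodic f (a, 0)) : AdmitsVerticallyPeriodicTiling W := by
  obtain ⟨y₀, p, hp, -, hwin⟩ :=
    exists_window_repeat (fun y (i : Set.Ico 0 a) => (⟨f (i, y), (hf i y).1⟩ : W)) 1
  refine admitsVerticallyPeriodicTiling_of_row_eq (y₀ := y₀) hf hp fun x => ?_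
  have hrow : ∀ y, Periodic (fun x => f (x, y)) a := fun y x => by simpa using hper (x, y)
  have hmem : toIcoMod ha 0 x ∈ Set.Ico 0 a := by simpa using toIcoMod_mem_Ico ha 0 x
  have := congrArg Subtype.val (congrFun (hwin 0 (by simp) (by simp)) ⟨_, hmem⟩)
  simp only [add_zero] at this
  rwa [(hrow _).apply_toIcoMod, (hrow _).apply_toIcoMod] at this

/-- The tiling with period `(a, b)` whose strip `ℤ × [0, b)` is `(x, r) ↦ f (ρ x, r)`. -/
def stripExtension (f : ℤ × ℤ → WangTile C) (ρ : ℤ → ℤ) (a b : ℤ) : ℤ × ℤ → WangTile C :=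
  fun t => f (ρ (t.1 - t.2 / b * a), t.2 % b)

section StripExtension

variable {ρ : ℤ → ℤ} {a b : ℤ}

theorem stripExtension_add_mul (hb : 0 < b) (x q : ℤ) {r : ℤ} (hr₀ : 0 ≤ r) (hrb : r < b) :
    stripExtension f ρ a b (x, r + b * q) = f (ρ (x - q * a), r) := by
  obtain ⟨hq, hr⟩ := (Int.ediv_emod_unique hb (q := q)).2 ⟨rfl, hr₀, hrb⟩
  simp only [stripExtension, hq, hr]

theorem isZTiling_stripExtension (hf : IsZTiling W f) (hb : 0 < b) (hper : Periodic f (a, b))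
    (hρ₁ : ∀ x r, 0 ≤ r → r < b → f (ρ (x + 1), r) = f (ρ x + 1, r))
    (hρa : ∀ x, f (ρ (x + -a), 0) = f (ρ x + -a, 0)) :
    IsZTiling W (stripExtension f ρ a b) := by
  intro x y
  have hr₀ := Int.emod_nonneg y hb.ne'
  have hrb := Int.emod_lt_of_pos y hb
  have hy := Int.emod_add_mul_ediv y b
  refine ⟨(hf _ _).1, ?_, ?_⟩
  · simp only [stripExtension]
    rw [(hf _ _).2.1, show x + 1 - y / b * a = x - y / b * a + 1 by ring, hρ₁ _ _ hr₀ hrb]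
  rcases (Int.add_one_le_iff.2 hrb).lt_or_eq with hlt | hlast
  · rw [show y + 1 = y % b + 1 + b * (y / b) by omega,
      stripExtension_add_mul hb _ _ (by omega) hlt]
    exact (hf _ _).2.2
  · -- crossing the top of the strip: `f (z, b) = f (z - a, 0)` by the period `(a, b)`
    rw [show y + 1 = 0 + b * (y / b + 1) by linarith, stripExtension_add_mul hb _ _ le_rfl hb,
      show x - (y / b + 1) * a = x - y / b * a + -a by ring, hρa]
    simp only [stripExtension]
    rw [(hf _ _).2.2, hlast]
    simpa using congrArg WangTile.south (hper (ρ (x - y / b * a) + -a, 0))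

theorem stripExtension_add_vertical {p : ℤ} (hρ : Periodic ρ p) (hb : 0 < b) (x y : ℤ) :
    stripExtension f ρ a b (x, y + p * b) = stripExtension f ρ a b (x, y) := by
  simp only [stripExtension, Int.add_mul_ediv_right y p hb.ne', Int.add_mul_emod_self_right]
  rw [show x - (y / b + p) * a = x - y / b * a - a • p by rw [smul_eq_mul]; ring,
    hρ.sub_zsmul_eq]

end StripExtension

theorem admitsVerticallyPeriodicTiling_of_period (hf : IsZTiling W f) {a b : ℤ} (hb : 0 < b)
    (hper : Periodic f (a, b)) : AdmitsVerticallyPeriodicTiling W := by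
  let column : ℤ → Set.Ico 0 b → W := fun x r => ⟨f (x, r), (hf x r).1⟩
  obtain ⟨x₀, p, hp, hNp, hwin⟩ := exists_window_repeat column (a.natAbs + 1)
  have hcol : ∀ x d, |d| ≤ ((a.natAbs + 1 : ℕ) : ℤ) → ∀ r, 0 ≤ r → r < b →
      f (toIcoMod hp x₀ (x + d), r) = f (toIcoMod hp x₀ x + d, r) := by
    intro x d hd r hr₀ hrb
    have := apply_toIcoMod_add_eq_of_window_repeat (g := column) hp (Nat.cast_nonneg _) hNp
      (Nat.cast_nonneg _) hNp hwin x (abs_le.1 hd).1 (abs_le.1 hd).2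
    exact congrArg Subtype.val (congrFun this ⟨r, hr₀, hrb⟩)
  refine ⟨stripExtension f (toIcoMod hp x₀) a b, p * b, ?_, mul_pos hp hb,
    fun x y => (stripExtension_add_vertical (toIcoMod_periodic hp x₀) hb x y).symm⟩
  exact isZTiling_stripExtension hf hb hper (fun x => hcol x 1 (by simp))
    fun x => hcol x (-a) (by simp) 0 le_rfl hb

/-- If `W` admits a periodic `ℤ²`-tiling, then it admits a vertically periodic `ℤ²`-tiling. -/
theorem stmt11 (W : Finset (WangTile C)) (f : ℤ × ℤ → WangTile C)
    (hf : IsZTiling W f) (hper : PeriodicTiling f) :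
    ∃ (f' : ℤ × ℤ → WangTile C) (vy : ℤ), IsZTiling W f' ∧ 0 < vy ∧
      ∀ x y : ℤ, f' (x, y) = f' (x, y + vy) := by
  obtain ⟨⟨a, b⟩, hv, hper⟩ := hper
  change Periodic f (a, b) at hper
  rcases lt_trichotomy b 0 with hb | rfl | hb
  · exact admitsVerticallyPeriodicTiling_of_period hf (neg_pos.2 hb) hper.neg
  · have ha : a ≠ 0 := by rintro rfl; exact hv rfl
    rcases ha.lt_or_gt with ha | ha
    · exact admitsVerticallyPeriodicTiling_of_horizontal_period hf (neg_pos.2 ha)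
        (by simpa using hper.neg)
    · exact admitsVerticallyPeriodicTiling_of_horizontal_period hf ha hper
  · exact admitsVerticallyPeriodicTiling_of_period hf hb hper
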